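/- arXiv:1602.02391 — 8 statements merged into one kernel-verified Lean document; each statement's English description precedes it below -/
import Mathlib

section
/- Let Γ be a monotone dispersion of g and let ω* be a maximizer of g over Ω. Then g(ω*) ≥ Γ(ω*). -/
/-!
If `g ω* < Γ ω*` at a maximizer `ω*` of `g`, then `g < Γ` everywhere: at points tied with `ω*`
the values of `Γ` are tied as well, and at any other `ω` the dispersion inequality
`g ω* / g ω > Γ ω* / Γ ω` gives `Γ ω / g ω > Γ ω* / g ω* > 1`. Two densities cannot be strictly
ordered everywhere, since their integrals over a nonzero measure would then differ.
-/

open MeasureTheory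

lemma lt_of_div_lt_div_of_lt {a b c d : ℝ} (ha : 0 < a) (hb : 0 < b) (hd : 0 < d)
    (hdiv : c / d < a / b) (hac : a < c) : b < d := by
  rw [div_lt_div_iff₀ hd hb] at hdiv
  nlinarith

lemma lt_everywhere_of_lt_at_max {Ω : Type*} {g Γ : Ω → ℝ}
    (hg_pos : ∀ ω, 0 < g ω) (hΓ_pos : ∀ ω, 0 < Γ ω)
    (h1 : ∀ ω₁ ω₂, g ω₁ = g ω₂ ↔ Γ ω₁ = Γ ω₂)
    (h3 : ∀ ω₁ ω₂, g ω₁ > g ω₂ → g ω₁ / g ω₂ > Γ ω₁ / Γ ω₂)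
    {ωs : Ω} (hmax : ∀ ω, g ω ≤ g ωs) (hlt : g ωs < Γ ωs) (ω : Ω) : g ω < Γ ω := by
  rcases (hmax ω).lt_or_eq with hless | htie
  · exact lt_of_div_lt_div_of_lt (hg_pos ωs) (hg_pos ω) (hΓ_pos ω) (h3 ωs ω hless) hlt
  · rwa [htie, (h1 ω ωs).mp htie]

lemma MeasureTheory.integral_lt_integral_of_forall_lt {α : Type*} [MeasurableSpace α]
    {μ : Measure α} [NeZero μ] {f h : α → ℝ} (hf : Integrable f μ) (hh : Integrable h μ)
    (hlt : ∀ x, f x < h x) : ∫ x, f x ∂μ < ∫ x, h x ∂μ := by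
  refine (integral_mono hf hh fun x ↦ (hlt x).le).lt_of_ne fun heq ↦ ?_
  have hae : f =ᵐ[μ] h :=
    (integral_eq_iff_of_ae_le hf hh (.of_forall fun x ↦ (hlt x).le)).mp heq
  obtain ⟨x, hx⟩ := hae.exists
  exact (hlt x).ne hx

theorem monotone_dispersion_max_le_general
    {Ω : Type*} [MeasurableSpace Ω] (M : Measure Ω) (g Γ : Ω → ℝ)
    (hg_pos : ∀ ω, 0 < g ω) (hΓ_pos : ∀ ω, 0 < Γ ω)
    (hg_int : Integrable g M) (hΓ_int : Integrable Γ M)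
    (hg_pdf : ∫ ω, g ω ∂M = 1) (hΓ_pdf : ∫ ω, Γ ω ∂M = 1)
    (h1 : ∀ ω₁ ω₂, g ω₁ = g ω₂ ↔ Γ ω₁ = Γ ω₂)
    (h3 : ∀ ω₁ ω₂, g ω₁ > g ω₂ → g ω₁ / g ω₂ > Γ ω₁ / Γ ω₂)
    (ωs : Ω) (hmax : ∀ ω, g ω ≤ g ωs) :
    g ωs ≥ Γ ωs := by
  by_contra! hlt
  have : NeZero M := ⟨by rintro rfl; simp at hg_pdf⟩
  have hint_lt := integral_lt_integral_of_forall_lt hg_int hΓ_int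
    (lt_everywhere_of_lt_at_max hg_pos hΓ_pos h1 h3 hmax hlt)
  rw [hg_pdf, hΓ_pdf] at hint_lt
  exact hint_lt.false

theorem monotone_dispersion_max_le
    {Ω : Type*} [MeasurableSpace Ω] (M : Measure Ω) (g Γ : Ω → ℝ)
    (hg_pos : ∀ ω, 0 < g ω) (hΓ_pos : ∀ ω, 0 < Γ ω)
    (hg_int : Integrable g M) (hΓ_int : Integrable Γ M)
    (hg_pdf : ∫ ω, g ω ∂M = 1) (hΓ_pdf : ∫ ω, Γ ω ∂M = 1)
    (h1 : ∀ ω₁ ω₂, g ω₁ = g ω₂ ↔ Γ ω₁ = Γ ω₂)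
    (h2 : ∀ ω₁ ω₂, g ω₁ > g ω₂ ↔ Γ ω₁ > Γ ω₂)
    (h3 : ∀ ω₁ ω₂, g ω₁ > g ω₂ → g ω₁ / g ω₂ > Γ ω₁ / Γ ω₂)
    (ωs : Ω) (hmax : ∀ ω, g ω ≤ g ωs) :
    g ωs ≥ Γ ωs :=
  monotone_dispersion_max_le_general M g Γ hg_pos hΓ_pos hg_int hΓ_int hg_pdf hΓ_pdf h1 h3 ωs hmax
end

section
/- Let Γ be a monotone dispersion of g, let ω* be a maximizer of g over Ω, and suppose the set {ω : g(ω) < g(ω*)} has positive measure. Then g(ω*) > Γ(ω*). -/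
/-!
Suppose instead `g ω* ≤ Γ ω*`. The ratio condition, applied to `ω*` and any `ω` with
`g ω < g ω*`, gives `g ω < Γ ω`, and at points where `g` is maximal `Γ` is maximal too, so
`g ≤ Γ` everywhere. Two densities with `g ≤ Γ` have equal integrals only if `g = Γ` a.e., which
contradicts `g < Γ` on the set `{g < g ω*}` of positive measure.
-/

open MeasureTheory

lemma lt_of_div_lt_div_of_le {a b c d : ℝ} (hb : 0 < b) (hc : 0 < c) (hd : 0 < d)
    (h : c / d < a / b) (hac : a ≤ c) : b < d := by
  rw [div_lt_div_iff₀ hd hb] at h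
  have : c * b < c * d := h.trans_le (mul_le_mul_of_nonneg_right hac hd.le)
  exact lt_of_mul_lt_mul_left this hc.le

theorem monotone_dispersion_max_lt_general
    {Ω : Type*} [MeasurableSpace Ω] (M : Measure Ω) (g Γ : Ω → ℝ)
    (hg_pos : ∀ ω, 0 < g ω) (hΓ_pos : ∀ ω, 0 < Γ ω)
    (hg_int : Integrable g M) (hΓ_int : Integrable Γ M)
    (hg_pdf : ∫ ω, g ω ∂M = 1) (hΓ_pdf : ∫ ω, Γ ω ∂M = 1)
    (h1 : ∀ ω₁ ω₂, g ω₁ = g ω₂ ↔ Γ ω₁ = Γ ω₂)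
    (h3 : ∀ ω₁ ω₂, g ω₁ > g ω₂ → g ω₁ / g ω₂ > Γ ω₁ / Γ ω₂)
    (ωs : Ω) (hmax : ∀ ω, g ω ≤ g ωs)
    (hpos : 0 < M {ω | g ω < g ωs}) :
    g ωs > Γ ωs := by
  by_contra! hle
  have hlt : ∀ ω, g ω < g ωs → g ω < Γ ω := fun ω hω =>
    lt_of_div_lt_div_of_le (hg_pos ω) (hΓ_pos ωs) (hΓ_pos ω) (h3 ωs ω hω) hle
  have hgΓ : ∀ ω, g ω ≤ Γ ω := by
    intro ω
    rcases (hmax ω).lt_or_eq with hω | hω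
    · exact (hlt ω hω).le
    · rw [hω, (h1 ω ωs).mp hω]
      exact hle
  have hae : g =ᵐ[M] Γ :=
    (integral_eq_iff_of_ae_le hg_int hΓ_int (ae_of_all _ hgΓ)).mp (hg_pdf.trans hΓ_pdf.symm)
  exact hpos.ne' (measure_mono_null (fun ω hω => (hlt ω hω).ne) (ae_iff.mp hae))

theorem monotone_dispersion_max_lt
    {Ω : Type*} [MeasurableSpace Ω] (M : Measure Ω) (g Γ : Ω → ℝ)
    (hg_pos : ∀ ω, 0 < g ω) (hΓ_pos : ∀ ω, 0 < Γ ω)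
    (hg_int : Integrable g M) (hΓ_int : Integrable Γ M)
    (hg_pdf : ∫ ω, g ω ∂M = 1) (hΓ_pdf : ∫ ω, Γ ω ∂M = 1)
    (h1 : ∀ ω₁ ω₂, g ω₁ = g ω₂ ↔ Γ ω₁ = Γ ω₂)
    (h2 : ∀ ω₁ ω₂, g ω₁ > g ω₂ ↔ Γ ω₁ > Γ ω₂)
    (h3 : ∀ ω₁ ω₂, g ω₁ > g ω₂ → g ω₁ / g ω₂ > Γ ω₁ / Γ ω₂)
    (ωs : Ω) (hmax : ∀ ω, g ω ≤ g ωs)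
    (hpos : 0 < M {ω | g ω < g ωs}) :
    g ωs > Γ ωs :=
  monotone_dispersion_max_lt_general M g Γ hg_pos hΓ_pos hg_int hΓ_int hg_pdf hΓ_pdf h1 h3 ωs hmax
    hpos
end

section
/- Let g : Ω → ℝ₊₊ be a non-uniform probability density function and let γ > 1 be such that g^γ is integrable with positive finite integral. Then g is a monotone dispersion of the normalized function Γ(ω) = g(ω)^γ / ∫ g^γ dM (equivalently, Γ is a monotone concentration of g): for all ω₁, ω₂, g(ω₁) > g(ω₂) implies Γ(ω₁)/Γ(ω₂) > g(ω₁)/g(ω₂), and the order-preservation conditions hold. -/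
open MeasureTheory

section RpowDivConst

variable {x y γ c : ℝ}

theorem strictMonoOn_rpow_div_const (hγ : 0 < γ) (hc : 0 < c) :
    StrictMonoOn (fun x : ℝ => x ^ γ / c) (Set.Ici 0) :=
  fun _ hx _ hy hxy =>
    div_lt_div_of_pos_right (Real.strictMonoOn_rpow_Ici_of_exponent_pos hγ hx hy hxy) hc

theorem rpow_div_const_div_rpow_div_const (hc : c ≠ 0) (hx : 0 ≤ x) (hy : 0 ≤ y) :
    (x ^ γ / c) / (y ^ γ / c) = (x / y) ^ γ := by
  rw [div_div_div_cancel_right₀ hc, Real.div_rpow hx hy]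

theorem div_lt_rpow_div_const_div_rpow_div_const (hγ : 1 < γ) (hc : c ≠ 0) (hy : 0 < y)
    (hyx : y < x) : x / y < (x ^ γ / c) / (y ^ γ / c) := by
  rw [rpow_div_const_div_rpow_div_const hc (hy.trans hyx).le hy.le]
  exact Real.self_lt_rpow_of_one_lt ((one_lt_div hy).2 hyx) hγ

end RpowDivConst

theorem power_gt_one_monotone_concentration_general
    {Ω : Type*} [MeasurableSpace Ω] (M : Measure Ω) (g : Ω → ℝ) (γ : ℝ)
    (hg_pos : ∀ ω, 0 < g ω)
    (hγ : 1 < γ)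
    (hint_pos : 0 < ∫ ω, g ω ^ γ ∂M) :
    (∀ ω₁ ω₂, g ω₁ = g ω₂ ↔
        g ω₁ ^ γ / ∫ ω, g ω ^ γ ∂M = g ω₂ ^ γ / ∫ ω, g ω ^ γ ∂M) ∧
    (∀ ω₁ ω₂, g ω₁ > g ω₂ ↔
        g ω₁ ^ γ / ∫ ω, g ω ^ γ ∂M > g ω₂ ^ γ / ∫ ω, g ω ^ γ ∂M) ∧
    (∀ ω₁ ω₂, g ω₁ > g ω₂ →
        (g ω₁ ^ γ / ∫ ω, g ω ^ γ ∂M) / (g ω₂ ^ γ / ∫ ω, g ω ^ γ ∂M) >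
          g ω₁ / g ω₂) := by
  have hmono := strictMonoOn_rpow_div_const (zero_lt_one.trans hγ) hint_pos
  have hg_mem : ∀ ω, g ω ∈ Set.Ici 0 := fun ω => (hg_pos ω).le
  exact ⟨fun ω₁ ω₂ => (hmono.eq_iff_eq (hg_mem ω₁) (hg_mem ω₂)).symm,
    fun ω₁ ω₂ => (hmono.lt_iff_lt (hg_mem ω₂) (hg_mem ω₁)).symm,
    fun _ ω₂ h => div_lt_rpow_div_const_div_rpow_div_const hγ hint_pos.ne' (hg_pos ω₂) h⟩

theorem power_gt_one_monotone_concentration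
    {Ω : Type*} [MeasurableSpace Ω] (M : Measure Ω) (g : Ω → ℝ) (γ : ℝ)
    (hg_pos : ∀ ω, 0 < g ω)
    (hg_pdf : ∫ ω, g ω ∂M = 1)
    (hg_nonunif : ∃ ω₁ ω₂, g ω₁ ≠ g ω₂)
    (hγ : 1 < γ)
    (hint_pos : 0 < ∫ ω, g ω ^ γ ∂M)
    (hint : Integrable (fun ω => g ω ^ γ) M) :
    (∀ ω₁ ω₂, g ω₁ = g ω₂ ↔
        g ω₁ ^ γ / ∫ ω, g ω ^ γ ∂M = g ω₂ ^ γ / ∫ ω, g ω ^ γ ∂M) ∧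
    (∀ ω₁ ω₂, g ω₁ > g ω₂ ↔
        g ω₁ ^ γ / ∫ ω, g ω ^ γ ∂M > g ω₂ ^ γ / ∫ ω, g ω ^ γ ∂M) ∧
    (∀ ω₁ ω₂, g ω₁ > g ω₂ →
        (g ω₁ ^ γ / ∫ ω, g ω ^ γ ∂M) / (g ω₂ ^ γ / ∫ ω, g ω ^ γ ∂M) >
          g ω₁ / g ω₂) :=
  power_gt_one_monotone_concentration_general M g γ hg_pos hγ hint_pos
end

section
/- Let Γ be a monotone dispersion of g. Define b := sup Γ({ω : g(ω) ≤ Γ(ω)}) and B := inf Γ({ω : g(ω) ≥ Γ(ω)}). Then b ≤ B. -/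
open MeasureTheory

/-! A point where `g ≤ Γ` cannot carry a larger `Γ`-value than a point where `Γ ≤ g`: otherwise
the order condition forces `g ω₁ > g ω₂`, and the dispersion inequality
`g ω₁ / g ω₂ > Γ ω₁ / Γ ω₂` contradicts `g ω₁ ≤ Γ ω₁`, `Γ ω₂ ≤ g ω₂`. Taking the supremum over
the first set and the infimum over the second gives `b ≤ B`. -/

theorem csSup_le_csInf_of_forall_le {α : Type*} [ConditionallyCompleteLattice α] {s t : Set α}
    (hs : s.Nonempty) (ht : t.Nonempty) (h : ∀ a ∈ s, ∀ b ∈ t, a ≤ b) : sSup s ≤ sInf t :=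
  csSup_le hs fun a ha => le_csInf ht fun b hb => h a ha b hb

theorem dispersion_apply_le_apply {Ω : Type*} {g Γ : Ω → ℝ} (hΓ_pos : ∀ ω, 0 < Γ ω)
    (hmono : ∀ ω₁ ω₂, Γ ω₁ > Γ ω₂ → g ω₁ > g ω₂)
    (hdisp : ∀ ω₁ ω₂, g ω₁ > g ω₂ → g ω₁ / g ω₂ > Γ ω₁ / Γ ω₂)
    {ω₁ ω₂ : Ω} (h₁ : g ω₁ ≤ Γ ω₁) (h₂ : g ω₂ ≥ Γ ω₂) : Γ ω₁ ≤ Γ ω₂ := by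
  by_contra! hlt
  have hratio : g ω₁ / g ω₂ ≤ Γ ω₁ / Γ ω₂ := div_le_div₀ (hΓ_pos ω₁).le h₁ (hΓ_pos ω₂) h₂
  exact (hdisp ω₁ ω₂ (hmono ω₁ ω₂ hlt)).not_ge hratio

theorem dispersion_b_le_B_general
    {Ω : Type*} (g Γ : Ω → ℝ)
    (hΓ_pos : ∀ ω, 0 < Γ ω)
    (h2 : ∀ ω₁ ω₂, g ω₁ > g ω₂ ↔ Γ ω₁ > Γ ω₂)
    (h3 : ∀ ω₁ ω₂, g ω₁ > g ω₂ → g ω₁ / g ω₂ > Γ ω₁ / Γ ω₂)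
    (hne₁ : {ω | g ω ≤ Γ ω}.Nonempty) (hne₂ : {ω | g ω ≥ Γ ω}.Nonempty) :
    sSup (Γ '' {ω | g ω ≤ Γ ω}) ≤ sInf (Γ '' {ω | g ω ≥ Γ ω}) := by
  refine csSup_le_csInf_of_forall_le (hne₁.image Γ) (hne₂.image Γ) ?_
  rintro _ ⟨ω₁, h₁, rfl⟩ _ ⟨ω₂, h₂, rfl⟩
  exact dispersion_apply_le_apply hΓ_pos (fun ω₁ ω₂ => (h2 ω₁ ω₂).mpr) h3 h₁ h₂

theorem dispersion_b_le_B
    {Ω : Type*} [MeasurableSpace Ω] (M : Measure Ω) (g Γ : Ω → ℝ)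
    (hg_pos : ∀ ω, 0 < g ω) (hΓ_pos : ∀ ω, 0 < Γ ω)
    (hg_pdf : ∫ ω, g ω ∂M = 1) (hΓ_pdf : ∫ ω, Γ ω ∂M = 1)
    (hg_nonunif : ∃ ω₁ ω₂, g ω₁ ≠ g ω₂) (hΓ_nonunif : ∃ ω₁ ω₂, Γ ω₁ ≠ Γ ω₂)
    (h1 : ∀ ω₁ ω₂, g ω₁ = g ω₂ ↔ Γ ω₁ = Γ ω₂)
    (h2 : ∀ ω₁ ω₂, g ω₁ > g ω₂ ↔ Γ ω₁ > Γ ω₂)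
    (h3 : ∀ ω₁ ω₂, g ω₁ > g ω₂ → g ω₁ / g ω₂ > Γ ω₁ / Γ ω₂)
    (hne₁ : {ω | g ω ≤ Γ ω}.Nonempty) (hne₂ : {ω | g ω ≥ Γ ω}.Nonempty)
    (hbdd : BddAbove (Γ '' {ω | g ω ≤ Γ ω})) :
    sSup (Γ '' {ω | g ω ≤ Γ ω}) ≤ sInf (Γ '' {ω | g ω ≥ Γ ω}) :=
  dispersion_b_le_B_general g Γ hΓ_pos h2 h3 hne₁ hne₂
end

section
/- Let Γ be a monotone dispersion of g, and let b := sup Γ({ω : g(ω) ≤ Γ(ω)}) and B := inf Γ({ω : g(ω) ≥ Γ(ω)}). Then for any r ∈ [b, B]: if Γ(ω) > r then g(ω) > Γ(ω), and if Γ(ω) < r then g(ω) < Γ(ω). -/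
open MeasureTheory

section

variable {α β : Type*} [ConditionallyCompleteLattice β] {f : α → β} {p : α → Prop} {a : α}

lemma not_of_csSup_image_lt (hf : BddAbove (f '' {x | p x})) (ha : sSup (f '' {x | p x}) < f a) :
    ¬ p a :=
  fun hp => notMem_of_csSup_lt ha hf ⟨a, hp, rfl⟩

lemma not_of_lt_csInf_image (hf : BddBelow (f '' {x | p x})) (ha : f a < sInf (f '' {x | p x})) :
    ¬ p a :=
  fun hp => notMem_of_lt_csInf ha hf ⟨a, hp, rfl⟩

end

theorem dispersion_threshold_general
    {Ω : Type*} (g Γ : Ω → ℝ)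
    (hΓ_pos : ∀ ω, 0 < Γ ω)
    (hbdd : BddAbove (Γ '' {ω | g ω ≤ Γ ω}))
    (r : ℝ)
    (hr : r ∈ Set.Icc (sSup (Γ '' {ω | g ω ≤ Γ ω})) (sInf (Γ '' {ω | g ω ≥ Γ ω}))) :
    (∀ ω, Γ ω > r → g ω > Γ ω) ∧ (∀ ω, Γ ω < r → g ω < Γ ω) := by
  obtain ⟨hbr, hrB⟩ := hr
  have hbdd_below : BddBelow (Γ '' {ω | g ω ≥ Γ ω}) :=
    ⟨0, by rintro _ ⟨ω, -, rfl⟩; exact (hΓ_pos ω).le⟩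
  refine ⟨fun ω hω => ?_, fun ω hω => ?_⟩
  · exact not_le.mp (not_of_csSup_image_lt (p := fun ω => g ω ≤ Γ ω) hbdd (hbr.trans_lt hω))
  · exact not_le.mp (not_of_lt_csInf_image (p := fun ω => g ω ≥ Γ ω) hbdd_below (hω.trans_le hrB))

theorem dispersion_threshold
    {Ω : Type*} [MeasurableSpace Ω] (M : Measure Ω) (g Γ : Ω → ℝ)
    (hg_pos : ∀ ω, 0 < g ω) (hΓ_pos : ∀ ω, 0 < Γ ω)
    (hg_pdf : ∫ ω, g ω ∂M = 1) (hΓ_pdf : ∫ ω, Γ ω ∂M = 1)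
    (hg_nonunif : ∃ ω₁ ω₂, g ω₁ ≠ g ω₂) (hΓ_nonunif : ∃ ω₁ ω₂, Γ ω₁ ≠ Γ ω₂)
    (h1 : ∀ ω₁ ω₂, g ω₁ = g ω₂ ↔ Γ ω₁ = Γ ω₂)
    (h2 : ∀ ω₁ ω₂, g ω₁ > g ω₂ ↔ Γ ω₁ > Γ ω₂)
    (h3 : ∀ ω₁ ω₂, g ω₁ > g ω₂ → g ω₁ / g ω₂ > Γ ω₁ / Γ ω₂)
    (hne₁ : {ω | g ω ≤ Γ ω}.Nonempty) (hne₂ : {ω | g ω ≥ Γ ω}.Nonempty)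
    (hbdd : BddAbove (Γ '' {ω | g ω ≤ Γ ω}))
    (r : ℝ)
    (hr : r ∈ Set.Icc (sSup (Γ '' {ω | g ω ≤ Γ ω})) (sInf (Γ '' {ω | g ω ≥ Γ ω}))) :
    (∀ ω, Γ ω > r → g ω > Γ ω) ∧ (∀ ω, Γ ω < r → g ω < Γ ω) :=
  dispersion_threshold_general g Γ hΓ_pos hbdd r hr
end

section
/- If Γ is a monotone dispersion of g, then the information entropy of Γ is at least that of g: H(Γ) ≥ H(g), where H(f) = −∫ f log f dM. -/
/-!
Write the entropy gap as
`H(Γ) - H(g) = (∫ g log g - ∫ g log Γ) + ∫ (g - Γ) log Γ`.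
The first term is a Kullback–Leibler divergence, nonnegative by Gibbs' inequality. For the
second, `Γ` is ordered like `g` but with contracted ratios, so `Γ x ≤ Γ y` whenever
`g x < Γ x` and `Γ y < g y`: some level `c` separates `log Γ` on these two sets,
making `(g - Γ) (log Γ - c)` pointwise nonnegative, and `∫ (g - Γ) = 0` removes `c`.
-/

open MeasureTheory Real

lemma sub_le_mul_log_sub_mul_log {a b : ℝ} (ha : 0 < a) (hb : 0 < b) :
    a - b ≤ a * log a - a * log b := by
  have h := mul_le_mul_of_nonneg_left (one_sub_inv_le_log_of_pos (div_pos ha hb)) ha.le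
  rw [log_div ha.ne' hb.ne', inv_div, mul_sub, mul_sub, mul_one, mul_div_cancel₀ _ ha.ne'] at h
  exact h

section Integrals

variable {Ω : Type*} [MeasurableSpace Ω] {μ : Measure Ω}

theorem integral_mul_log_le_integral_mul_log {g Γ : Ω → ℝ}
    (hg_pos : ∀ ω, 0 < g ω) (hΓ_pos : ∀ ω, 0 < Γ ω)
    (hg : Integrable g μ) (hΓ : Integrable Γ μ)
    (hgg : Integrable (fun ω => g ω * log (g ω)) μ)
    (hgΓ : Integrable (fun ω => g ω * log (Γ ω)) μ)
    (hmass : ∫ ω, Γ ω ∂μ ≤ ∫ ω, g ω ∂μ) :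
    ∫ ω, g ω * log (Γ ω) ∂μ ≤ ∫ ω, g ω * log (g ω) ∂μ := by
  have h : ∫ ω, (g ω - Γ ω) ∂μ ≤ ∫ ω, (g ω * log (g ω) - g ω * log (Γ ω)) ∂μ :=
    integral_mono (hg.sub' hΓ) (hgg.sub' hgΓ) fun ω => sub_le_mul_log_sub_mul_log (hg_pos ω) (hΓ_pos ω)
  rw [integral_sub hg hΓ, integral_sub hgg hgΓ] at h
  linarith

lemma integral_mul_eq_zero_of_nonneg_of_integral_eq_zero {h : Ω → ℝ} (ψ : Ω → ℝ)
    (h_nonneg : 0 ≤ h) (hh : Integrable h μ) (h_zero : ∫ ω, h ω ∂μ = 0) :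
    ∫ ω, h ω * ψ ω ∂μ = 0 := by
  have hae := (integral_eq_zero_iff_of_nonneg h_nonneg hh).1 h_zero
  exact integral_eq_zero_of_ae (by filter_upwards [hae] with ω hω; simp [hω])

lemma integral_mul_nonneg_of_mul_sub_nonneg {h ψ : Ω → ℝ} {c : ℝ}
    (hh : Integrable h μ) (hhψ : Integrable (fun ω => h ω * ψ ω) μ)
    (h_zero : ∫ ω, h ω ∂μ = 0) (hc : ∀ ω, 0 ≤ h ω * (ψ ω - c)) :
    0 ≤ ∫ ω, h ω * ψ ω ∂μ := by
  have hshift : ∫ ω, h ω * (ψ ω - c) ∂μ = ∫ ω, h ω * ψ ω ∂μ := by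
    simp_rw [mul_sub]
    rw [integral_sub hhψ (hh.mul_const c), integral_mul_const, h_zero, zero_mul, sub_zero]
  exact hshift ▸ integral_nonneg hc

theorem integral_mul_nonneg_of_sign_separated {h ψ : Ω → ℝ}
    (hh : Integrable h μ) (hhψ : Integrable (fun ω => h ω * ψ ω) μ)
    (h_zero : ∫ ω, h ω ∂μ = 0) (hsep : ∀ x y, h x < 0 → 0 < h y → ψ x ≤ ψ y) :
    0 ≤ ∫ ω, h ω * ψ ω ∂μ := by
  by_cases hneg : ∃ x, h x < 0
  swap
  · push Not at hneg
    exact (integral_mul_eq_zero_of_nonneg_of_integral_eq_zero ψ hneg hh h_zero).ge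
  by_cases hpos : ∃ y, 0 < h y
  swap
  · push Not at hpos
    have := integral_mul_eq_zero_of_nonneg_of_integral_eq_zero (h := fun ω => -h ω) ψ
      (fun ω => neg_nonneg.2 (hpos ω)) hh.neg (by rw [integral_neg, h_zero, neg_zero])
    simp only [neg_mul, integral_neg, neg_eq_zero] at this
    exact this.ge
  obtain ⟨x₀, hx₀⟩ := hneg
  obtain ⟨y₀, hy₀⟩ := hpos
  set c := sSup (ψ '' {x | h x < 0})
  have hbdd : BddAbove (ψ '' {x | h x < 0}) := ⟨ψ y₀, by rintro _ ⟨x, hx, rfl⟩; exact hsep x y₀ hx hy₀⟩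
  refine integral_mul_nonneg_of_mul_sub_nonneg hh hhψ h_zero (c := c) fun ω => ?_
  rcases lt_trichotomy (h ω) 0 with hω | hω | hω
  · exact mul_nonneg_of_nonpos_of_nonpos hω.le (sub_nonpos.2 (le_csSup hbdd ⟨ω, hω, rfl⟩))
  · simp [hω]
  · refine mul_nonneg hω.le (sub_nonneg.2 (csSup_le ⟨ψ x₀, x₀, hx₀, rfl⟩ ?_))
    rintro _ ⟨x, hx, rfl⟩
    exact hsep x ω hx hω

end Integrals

lemma le_of_dispersion {Ω : Type*} {g Γ : Ω → ℝ} (hg_pos : ∀ ω, 0 < g ω) (hΓ_pos : ∀ ω, 0 < Γ ω)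
    (h2 : ∀ ω₁ ω₂, g ω₁ > g ω₂ ↔ Γ ω₁ > Γ ω₂)
    (h3 : ∀ ω₁ ω₂, g ω₁ > g ω₂ → g ω₁ / g ω₂ > Γ ω₁ / Γ ω₂)
    {x y : Ω} (hx : g x < Γ x) (hy : Γ y < g y) : Γ x ≤ Γ y := by
  by_contra! hlt
  have hratio := h3 x y ((h2 x y).2 hlt)
  rw [gt_iff_lt, div_lt_div_iff₀ (hΓ_pos y) (hg_pos y)] at hratio
  nlinarith [hΓ_pos y, hg_pos y]

theorem dispersion_entropy_ge_general
    {Ω : Type*} [MeasurableSpace Ω] (M : Measure Ω) (g Γ : Ω → ℝ)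
    (hg_pos : ∀ ω, 0 < g ω) (hΓ_pos : ∀ ω, 0 < Γ ω)
    (hg_pdf : ∫ ω, g ω ∂M = 1) (hΓ_pdf : ∫ ω, Γ ω ∂M = 1)
    (hint₁ : Integrable (fun ω => g ω * Real.log (g ω)) M)
    (hint₂ : Integrable (fun ω => g ω * Real.log (Γ ω)) M)
    (hint₃ : Integrable (fun ω => Γ ω * Real.log (Γ ω)) M)
    (h2 : ∀ ω₁ ω₂, g ω₁ > g ω₂ ↔ Γ ω₁ > Γ ω₂)
    (h3 : ∀ ω₁ ω₂, g ω₁ > g ω₂ → g ω₁ / g ω₂ > Γ ω₁ / Γ ω₂) :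
    (-∫ ω, Γ ω * Real.log (Γ ω) ∂M) ≥ -∫ ω, g ω * Real.log (g ω) ∂M := by
  have hg : Integrable g M := .of_integral_ne_zero (by simp [hg_pdf])
  have hΓ : Integrable Γ M := .of_integral_ne_zero (by simp [hΓ_pdf])
  have hgibbs := integral_mul_log_le_integral_mul_log hg_pos hΓ_pos hg hΓ hint₁ hint₂
    (by rw [hg_pdf, hΓ_pdf])
  have hcross : 0 ≤ ∫ ω, (g ω - Γ ω) * log (Γ ω) ∂M := by
    refine integral_mul_nonneg_of_sign_separated (hg.sub hΓ) ?_
      (by rw [integral_sub hg hΓ, hg_pdf, hΓ_pdf, sub_self]) fun x y hx hy => ?_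
    · simpa only [sub_mul] using hint₂.sub' hint₃
    · exact log_le_log (hΓ_pos x)
        (le_of_dispersion hg_pos hΓ_pos h2 h3 (sub_neg.1 hx) (sub_pos.1 hy))
  simp only [sub_mul] at hcross
  rw [integral_sub hint₂ hint₃] at hcross
  linarith

theorem dispersion_entropy_ge
    {Ω : Type*} [MeasurableSpace Ω] (M : Measure Ω) (g Γ : Ω → ℝ)
    (hg_pos : ∀ ω, 0 < g ω) (hΓ_pos : ∀ ω, 0 < Γ ω)
    (hg_pdf : ∫ ω, g ω ∂M = 1) (hΓ_pdf : ∫ ω, Γ ω ∂M = 1)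
    (hg_nonunif : ∃ ω₁ ω₂, g ω₁ ≠ g ω₂) (hΓ_nonunif : ∃ ω₁ ω₂, Γ ω₁ ≠ Γ ω₂)
    (hint₁ : Integrable (fun ω => g ω * Real.log (g ω)) M)
    (hint₂ : Integrable (fun ω => g ω * Real.log (Γ ω)) M)
    (hint₃ : Integrable (fun ω => Γ ω * Real.log (Γ ω)) M)
    (h1 : ∀ ω₁ ω₂, g ω₁ = g ω₂ ↔ Γ ω₁ = Γ ω₂)
    (h2 : ∀ ω₁ ω₂, g ω₁ > g ω₂ ↔ Γ ω₁ > Γ ω₂)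
    (h3 : ∀ ω₁ ω₂, g ω₁ > g ω₂ → g ω₁ / g ω₂ > Γ ω₁ / Γ ω₂) :
    (-∫ ω, Γ ω * Real.log (Γ ω) ∂M) ≥ -∫ ω, g ω * Real.log (g ω) ∂M :=
  dispersion_entropy_ge_general M g Γ hg_pos hΓ_pos hg_pdf hΓ_pdf hint₁ hint₂ hint₃ h2 h3
end

section
/- Let Γ be a monotone dispersion of g, with b := sup Γ({ω : g(ω) ≤ Γ(ω)}) and B := inf Γ({ω : g(ω) ≥ Γ(ω)}). If there exists r ∈ [b, B] such that M({ω : Γ(ω) ≠ r}) > 0, then H(Γ) > H(g). -/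
/-!
Write `r` for the level in `[b, B]`. The monotone-dispersion conditions force `Γ ≤ r` where
`g ≤ Γ` and `r ≤ Γ` where `Γ ≤ g`, so `(g - Γ) (log Γ - log r) ≥ 0`. Together with the tangent
inequality of the convex function `t ↦ t log t` at `Γ` this gives the pointwise bound
`g log g - Γ log Γ ≥ (1 + log r) (g - Γ)`, strict wherever `Γ ≠ r`. Since `∫ g = ∫ Γ`, the right
side integrates to zero, and integrating the bound yields `H(Γ) > H(g)`.
-/

open MeasureTheory Real

namespace Real

lemma one_add_log_mul_sub_le_mul_log_sub_mul_log {x y : ℝ} (hx : 0 < x) (hy : 0 < y) :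
    (1 + log y) * (x - y) ≤ x * log x - y * log y := by
  have h : x * log (y / x) ≤ x * (y / x - 1) :=
    mul_le_mul_of_nonneg_left (log_le_sub_one_of_pos (div_pos hy hx)) hx.le
  rw [log_div hy.ne' hx.ne', mul_sub_one, mul_div_cancel₀ _ hx.ne'] at h
  linarith

lemma one_add_log_mul_sub_lt_mul_log_sub_mul_log {x y : ℝ} (hx : 0 < x) (hy : 0 < y)
    (hxy : x ≠ y) : (1 + log y) * (x - y) < x * log x - y * log y := by
  have hyx : y / x ≠ 1 := fun h => hxy ((div_eq_one_iff_eq hx.ne').1 h).symm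
  have h : x * log (y / x) < x * (y / x - 1) :=
    mul_lt_mul_of_pos_left (log_lt_sub_one_of_pos (div_pos hy hx) hyx) hx
  rw [log_div hy.ne' hx.ne', mul_sub_one, mul_div_cancel₀ _ hx.ne'] at h
  linarith

section Level

variable {x y r : ℝ} (hy : 0 < y) (hr : 0 < r) (hle : x ≤ y → y ≤ r) (hge : y ≤ x → r ≤ y)
include hy hr hle hge

lemma one_add_log_level_mul_sub_le_one_add_log_mul_sub :
    (1 + log r) * (x - y) ≤ (1 + log y) * (x - y) := by
  rcases le_total x y with hxy | hxy
  · have := log_le_log hy (hle hxy)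
    nlinarith
  · have := log_le_log hr (hge hxy)
    nlinarith

lemma one_add_log_level_mul_sub_le_mul_log_sub_mul_log (hx : 0 < x) :
    (1 + log r) * (x - y) ≤ x * log x - y * log y :=
  (one_add_log_level_mul_sub_le_one_add_log_mul_sub hy hr hle hge).trans
    (one_add_log_mul_sub_le_mul_log_sub_mul_log hx hy)

lemma one_add_log_level_mul_sub_lt_mul_log_sub_mul_log (hx : 0 < x) (hyr : y ≠ r) :
    (1 + log r) * (x - y) < x * log x - y * log y := by
  have hxy : x ≠ y := fun h => hyr (le_antisymm (hle h.le) (hge h.ge))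
  exact (one_add_log_level_mul_sub_le_one_add_log_mul_sub hy hr hle hge).trans_lt
    (one_add_log_mul_sub_lt_mul_log_sub_mul_log hx hy hxy)

end Level

end Real

namespace MeasureTheory

variable {Ω : Type*} [MeasurableSpace Ω] {M : Measure Ω}

lemma integral_pos_of_pos_on {f : Ω → ℝ} {s : Set Ω} (hf : 0 ≤ f) (hfi : Integrable f M)
    (hs : 0 < M s) (hpos : ∀ ω ∈ s, 0 < f ω) : 0 < ∫ ω, f ω ∂M :=
  (integral_pos_iff_support_of_nonneg hf hfi).2
    (hs.trans_le (measure_mono fun ω hω => (hpos ω hω).ne'))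

lemma exists_le_of_integral_eq {f g : Ω → ℝ} (hf : Integrable f M) (hg : Integrable g M)
    (hM : M ≠ 0) (h : ∫ ω, f ω ∂M = ∫ ω, g ω ∂M) : ∃ ω, f ω ≤ g ω := by
  by_contra! hlt
  have : 0 < ∫ ω, (f ω - g ω) ∂M :=
    integral_pos_of_pos_on (fun ω => (sub_pos.2 (hlt ω)).le) (hf.sub hg)
      (Measure.measure_univ_pos.2 hM) fun ω _ => sub_pos.2 (hlt ω)
  rw [integral_sub hf hg, h, sub_self] at this
  exact this.false

end MeasureTheory

section Dispersion

variable {Ω : Type*} {g Γ : Ω → ℝ} (hΓ_pos : ∀ ω, 0 < Γ ω)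
  (h2 : ∀ ω₁ ω₂, g ω₁ > g ω₂ ↔ Γ ω₁ > Γ ω₂)
  (h3 : ∀ ω₁ ω₂, g ω₁ > g ω₂ → g ω₁ / g ω₂ > Γ ω₁ / Γ ω₂)
include hΓ_pos h2 h3

lemma dispersion_le_of_le_of_ge {a b : Ω} (ha : g a ≤ Γ a) (hb : Γ b ≤ g b) : Γ a ≤ Γ b := by
  by_contra! hba
  have hratio : g a / g b ≤ Γ a / Γ b := div_le_div₀ (hΓ_pos a).le ha (hΓ_pos b) hb
  exact (h3 a b ((h2 a b).2 hba)).not_ge hratio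

lemma dispersion_le_of_sSup_le {b : Ω} (hb : Γ b ≤ g b) {r : ℝ}
    (hr : sSup (Γ '' {ω | g ω ≤ Γ ω}) ≤ r) {a : Ω} (ha : g a ≤ Γ a) : Γ a ≤ r := by
  have hbdd : BddAbove (Γ '' {ω | g ω ≤ Γ ω}) := by
    refine ⟨Γ b, ?_⟩
    rintro _ ⟨c, hc, rfl⟩
    exact dispersion_le_of_le_of_ge hΓ_pos h2 h3 hc hb
  exact (le_csSup hbdd ⟨a, ha, rfl⟩).trans hr

lemma le_dispersion_of_le_sInf {a : Ω} (ha : g a ≤ Γ a) {r : ℝ}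
    (hr : r ≤ sInf (Γ '' {ω | g ω ≥ Γ ω})) {b : Ω} (hb : Γ b ≤ g b) : r ≤ Γ b := by
  have hbdd : BddBelow (Γ '' {ω | g ω ≥ Γ ω}) := by
    refine ⟨Γ a, ?_⟩
    rintro _ ⟨c, hc, rfl⟩
    exact dispersion_le_of_le_of_ge hΓ_pos h2 h3 ha hc
  exact hr.trans (csInf_le hbdd ⟨b, hb, rfl⟩)

end Dispersion

theorem dispersion_entropy_gt_general
    {Ω : Type*} [MeasurableSpace Ω] (M : Measure Ω) (g Γ : Ω → ℝ)
    (hg_pos : ∀ ω, 0 < g ω) (hΓ_pos : ∀ ω, 0 < Γ ω)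
    (hg_pdf : ∫ ω, g ω ∂M = 1) (hΓ_pdf : ∫ ω, Γ ω ∂M = 1)
    (hint₁ : Integrable (fun ω => g ω * Real.log (g ω)) M)
    (hint₃ : Integrable (fun ω => Γ ω * Real.log (Γ ω)) M)
    (h2 : ∀ ω₁ ω₂, g ω₁ > g ω₂ ↔ Γ ω₁ > Γ ω₂)
    (h3 : ∀ ω₁ ω₂, g ω₁ > g ω₂ → g ω₁ / g ω₂ > Γ ω₁ / Γ ω₂)
    (r : ℝ)
    (hr : r ∈ Set.Icc (sSup (Γ '' {ω | g ω ≤ Γ ω})) (sInf (Γ '' {ω | g ω ≥ Γ ω})))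
    (hpos : 0 < M {ω | Γ ω ≠ r}) :
    (-∫ ω, Γ ω * Real.log (Γ ω) ∂M) > -∫ ω, g ω * Real.log (g ω) ∂M := by
  have hg_int : Integrable g M := .of_integral_ne_zero (by simp [hg_pdf])
  have hΓ_int : Integrable Γ M := .of_integral_ne_zero (by simp [hΓ_pdf])
  have hM : M ≠ 0 := by rintro rfl; simp at hpos
  obtain ⟨a, ha⟩ := exists_le_of_integral_eq hg_int hΓ_int hM (hg_pdf.trans hΓ_pdf.symm)
  obtain ⟨b, hb⟩ := exists_le_of_integral_eq hΓ_int hg_int hM (hΓ_pdf.trans hg_pdf.symm)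
  have hle : ∀ ω, g ω ≤ Γ ω → Γ ω ≤ r := fun ω =>
    dispersion_le_of_sSup_le hΓ_pos h2 h3 hb hr.1
  have hge : ∀ ω, Γ ω ≤ g ω → r ≤ Γ ω := fun ω =>
    le_dispersion_of_le_sInf hΓ_pos h2 h3 ha hr.2
  have hr_pos : 0 < r := (hΓ_pos a).trans_le (hle a ha)
  have hent_int : Integrable (fun ω => g ω * Real.log (g ω) - Γ ω * Real.log (Γ ω)) M :=
    hint₁.sub hint₃
  have hlin_int : Integrable (fun ω => (1 + Real.log r) * (g ω - Γ ω)) M :=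
    (hg_int.sub hΓ_int).const_mul _
  have hgap : 0 < ∫ ω, (g ω * Real.log (g ω) - Γ ω * Real.log (Γ ω)
      - (1 + Real.log r) * (g ω - Γ ω)) ∂M :=
    integral_pos_of_pos_on
      (fun ω => sub_nonneg.2 <| Real.one_add_log_level_mul_sub_le_mul_log_sub_mul_log
        (hΓ_pos ω) hr_pos (hle ω) (hge ω) (hg_pos ω))
      (hent_int.sub hlin_int) hpos
      fun ω hω => sub_pos.2 <| Real.one_add_log_level_mul_sub_lt_mul_log_sub_mul_log
        (hΓ_pos ω) hr_pos (hle ω) (hge ω) (hg_pos ω) hω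
  rw [integral_sub hent_int hlin_int, integral_sub hint₁ hint₃, integral_const_mul,
    integral_sub hg_int hΓ_int, hg_pdf, hΓ_pdf] at hgap
  linarith

theorem dispersion_entropy_gt
    {Ω : Type*} [MeasurableSpace Ω] (M : Measure Ω) (g Γ : Ω → ℝ)
    (hg_pos : ∀ ω, 0 < g ω) (hΓ_pos : ∀ ω, 0 < Γ ω)
    (hg_pdf : ∫ ω, g ω ∂M = 1) (hΓ_pdf : ∫ ω, Γ ω ∂M = 1)
    (hg_nonunif : ∃ ω₁ ω₂, g ω₁ ≠ g ω₂) (hΓ_nonunif : ∃ ω₁ ω₂, Γ ω₁ ≠ Γ ω₂)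
    (hint₁ : Integrable (fun ω => g ω * Real.log (g ω)) M)
    (hint₂ : Integrable (fun ω => g ω * Real.log (Γ ω)) M)
    (hint₃ : Integrable (fun ω => Γ ω * Real.log (Γ ω)) M)
    (h1 : ∀ ω₁ ω₂, g ω₁ = g ω₂ ↔ Γ ω₁ = Γ ω₂)
    (h2 : ∀ ω₁ ω₂, g ω₁ > g ω₂ ↔ Γ ω₁ > Γ ω₂)
    (h3 : ∀ ω₁ ω₂, g ω₁ > g ω₂ → g ω₁ / g ω₂ > Γ ω₁ / Γ ω₂)
    (r : ℝ)
    (hr : r ∈ Set.Icc (sSup (Γ '' {ω | g ω ≤ Γ ω})) (sInf (Γ '' {ω | g ω ≥ Γ ω})))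
    (hpos : 0 < M {ω | Γ ω ≠ r}) :
    (-∫ ω, Γ ω * Real.log (Γ ω) ∂M) > -∫ ω, g ω * Real.log (g ω) ∂M :=
  dispersion_entropy_gt_general M g Γ hg_pos hΓ_pos hg_pdf hΓ_pdf hint₁ hint₃ h2 h3 r hr hpos
end

section
/- Let g be a non-uniform probability density function on Ω such that for some γ ∈ (0,1), Γ_γ(ω) := g(ω)^γ / ∫ g^γ dM is also a probability density function with well-defined entropy. Then H(Γ_γ) ≥ H(g): exponentiating with a weight less than one and normalizing does not decrease information entropy. -/
/-!
Put `Z = ∫ g^γ` and `Γ = g^γ / Z`, so that `log Γ = γ log g - log Z`. Gibbs' inequality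
`∫ p log q ≤ ∫ p log p` for densities `p, q`, applied to `(g, Γ)` and to `(Γ, g)`, turns into
`(1 - γ) ∫ Γ log Γ ≤ -log Z ≤ (1 - γ) ∫ g log g`, and `γ < 1` gives `H(g) ≤ H(Γ)`.
-/

open MeasureTheory

lemma Real.mul_log_sub_mul_log_le_sub {p q : ℝ} (hp : 0 < p) (hq : 0 < q) :
    p * Real.log q - p * Real.log p ≤ q - p := by
  have h := mul_le_mul_of_nonneg_left (Real.log_le_sub_one_of_pos (div_pos hq hp)) hp.le
  rwa [Real.log_div hq.ne' hp.ne', mul_sub, mul_sub, mul_div_cancel₀ q hp.ne', mul_one] at h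

section Gibbs

variable {Ω : Type*} [MeasurableSpace Ω] {M : Measure Ω} {p q : Ω → ℝ}

lemma integral_mul_log_sub_integral_mul_log_le (hp : ∀ ω, 0 < p ω) (hq : ∀ ω, 0 < q ω)
    (hp_int : Integrable p M) (hq_int : Integrable q M)
    (hpp : Integrable (fun ω => p ω * Real.log (p ω)) M)
    (hpq : Integrable (fun ω => p ω * Real.log (q ω)) M) :
    ∫ ω, p ω * Real.log (q ω) ∂M - ∫ ω, p ω * Real.log (p ω) ∂M ≤
      ∫ ω, q ω ∂M - ∫ ω, p ω ∂M := by
  rw [← integral_sub hpq hpp, ← integral_sub hq_int hp_int]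
  exact integral_mono (hpq.sub hpp) (hq_int.sub hp_int) fun ω =>
    Real.mul_log_sub_mul_log_le_sub (hp ω) (hq ω)

lemma sub_one_mul_integral_mul_log_add_le_zero {b c : ℝ}
    (hp : ∀ ω, 0 < p ω) (hq : ∀ ω, 0 < q ω)
    (hp_pdf : ∫ ω, p ω ∂M = 1) (hq_pdf : ∫ ω, q ω ∂M = 1)
    (hpp : Integrable (fun ω => p ω * Real.log (p ω)) M)
    (hlog : ∀ ω, Real.log (q ω) = b * Real.log (p ω) + c) :
    (b - 1) * ∫ ω, p ω * Real.log (p ω) ∂M + c ≤ 0 := by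
  have hp_int : Integrable p M := .of_integral_ne_zero (by simp [hp_pdf])
  have hq_int : Integrable q M := .of_integral_ne_zero (by simp [hq_pdf])
  have hpq_eq : (fun ω => p ω * Real.log (q ω)) =
      fun ω => b * (p ω * Real.log (p ω)) + c * p ω := by
    ext ω
    rw [hlog ω]
    ring
  have hpq : Integrable (fun ω => p ω * Real.log (q ω)) M :=
    hpq_eq ▸ (hpp.const_mul b).add (hp_int.const_mul c)
  have hcross : ∫ ω, p ω * Real.log (q ω) ∂M = b * ∫ ω, p ω * Real.log (p ω) ∂M + c := by
    rw [hpq_eq, integral_add (hpp.const_mul b) (hp_int.const_mul c), integral_const_mul,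
      integral_const_mul, hp_pdf, mul_one]
  have := integral_mul_log_sub_integral_mul_log_le hp hq hp_int hq_int hpp hpq
  rw [hcross, hp_pdf, hq_pdf] at this
  linarith

end Gibbs

theorem weighting_lt_one_increases_entropy_general
    {Ω : Type*} [MeasurableSpace Ω] (M : Measure Ω) (g : Ω → ℝ) (γ : ℝ)
    (hg_pos : ∀ ω, 0 < g ω)
    (hg_pdf : ∫ ω, g ω ∂M = 1)
    (hγ0 : 0 < γ) (hγ1 : γ < 1)
    (hint_pos : 0 < ∫ ω, g ω ^ γ ∂M)
    (hent₁ : Integrable (fun ω => g ω * Real.log (g ω)) M)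
    (hent₃ : Integrable
      (fun ω => (g ω ^ γ / ∫ ω', g ω' ^ γ ∂M) *
        Real.log (g ω ^ γ / ∫ ω', g ω' ^ γ ∂M)) M) :
    (-∫ ω, (g ω ^ γ / ∫ ω', g ω' ^ γ ∂M) *
        Real.log (g ω ^ γ / ∫ ω', g ω' ^ γ ∂M) ∂M) ≥
      -∫ ω, g ω * Real.log (g ω) ∂M := by
  set Z := ∫ ω', g ω' ^ γ ∂M
  set Γ : Ω → ℝ := fun ω => g ω ^ γ / Z
  have hΓ_pos : ∀ ω, 0 < Γ ω := fun ω => div_pos (Real.rpow_pos_of_pos (hg_pos ω) γ) hint_pos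
  have hΓ_pdf : ∫ ω, Γ ω ∂M = 1 := by rw [integral_div, div_self hint_pos.ne']
  have hlogΓ : ∀ ω, Real.log (Γ ω) = γ * Real.log (g ω) + -Real.log Z := fun ω => by
    rw [Real.log_div (Real.rpow_pos_of_pos (hg_pos ω) γ).ne' hint_pos.ne',
      Real.log_rpow (hg_pos ω), sub_eq_add_neg]
  have hlogg : ∀ ω, Real.log (g ω) = γ⁻¹ * Real.log (Γ ω) + Real.log Z / γ := fun ω => by
    rw [hlogΓ ω]
    field_simp
    ring
  have hgΓ := sub_one_mul_integral_mul_log_add_le_zero hg_pos hΓ_pos hg_pdf hΓ_pdf hent₁ hlogΓ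
  have hΓg := sub_one_mul_integral_mul_log_add_le_zero hΓ_pos hg_pos hΓ_pdf hg_pdf hent₃ hlogg
  have hΓg' : (1 - γ) * ∫ ω, Γ ω * Real.log (Γ ω) ∂M + Real.log Z ≤ 0 := by
    have := mul_nonpos_of_nonneg_of_nonpos hγ0.le hΓg
    field_simp at this
    linarith
  nlinarith

theorem weighting_lt_one_increases_entropy
    {Ω : Type*} [MeasurableSpace Ω] (M : Measure Ω) (g : Ω → ℝ) (γ : ℝ)
    (hg_pos : ∀ ω, 0 < g ω)
    (hg_pdf : ∫ ω, g ω ∂M = 1)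
    (hg_nonunif : ∃ ω₁ ω₂, g ω₁ ≠ g ω₂)
    (hγ0 : 0 < γ) (hγ1 : γ < 1)
    (hint_pos : 0 < ∫ ω, g ω ^ γ ∂M)
    (hint : Integrable (fun ω => g ω ^ γ) M)
    (hΓ_pdf : ∫ ω, g ω ^ γ / (∫ ω', g ω' ^ γ ∂M) ∂M = 1)
    (hent₁ : Integrable (fun ω => g ω * Real.log (g ω)) M)
    (hent₂ : Integrable
      (fun ω => g ω * Real.log (g ω ^ γ / ∫ ω', g ω' ^ γ ∂M)) M)
    (hent₃ : Integrable
      (fun ω => (g ω ^ γ / ∫ ω', g ω' ^ γ ∂M) *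
        Real.log (g ω ^ γ / ∫ ω', g ω' ^ γ ∂M)) M) :
    (-∫ ω, (g ω ^ γ / ∫ ω', g ω' ^ γ ∂M) *
        Real.log (g ω ^ γ / ∫ ω', g ω' ^ γ ∂M) ∂M) ≥
      -∫ ω, g ω * Real.log (g ω) ∂M :=
  weighting_lt_one_increases_entropy_general M g γ hg_pos hg_pdf hγ0 hγ1 hint_pos hent₁ hent₃
end
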